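/- Let V ∈ L_{m,n}(q,Q), let S be the approximating matrix built from V, and let W = (w_{ij}) := S(I − V S). Then for all indices i, j, k ∈ {1,…,m+n−1}: |w_{ij}| ≤ 3Q/(q² m n) and |w_{ij} − w_{ik}| ≤ 3Q/(q² m n). -/

import Mathlib

open MeasureTheory ProbabilityTheory Filter Matrix Topology
open scoped ENNReal NNReal

noncomputable section

namespace Affiliation

/-- Index type for the parameter vector `θ ∈ ℝ^{m+n-1}`:
`Sum.inl i` corresponds to the coordinate `α_i` (`1 ≤ i ≤ m`),
`Sum.inr j` to the coordinate `β_j` (`1 ≤ j ≤ n-1`). -/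
abbrev Idx (m n : ℕ) := Fin m ⊕ Fin (n - 1)

/-- The logistic function `e^x / (1 + e^x)`. -/
def pf (x : ℝ) : ℝ := Real.exp x / (1 + Real.exp x)

/-- `e^x / (1 + e^x)^2`, the derivative of the logistic function. -/
def pf' (x : ℝ) : ℝ := Real.exp x / (1 + Real.exp x) ^ 2

variable {m n : ℕ} {Ω : Type*}

/-- `α_i` read off from `θ`. -/
def alphaF (θ : Idx m n → ℝ) (i : Fin m) : ℝ := θ (Sum.inl i)

/-- `β_j` read off from `θ`, with the convention `β_n = 0`. -/
def betaF (θ : Idx m n → ℝ) (j : Fin n) : ℝ :=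
  if h : (j : ℕ) < n - 1 then θ (Sum.inr ⟨j, h⟩) else 0

/-- The degree `d_i = Σ_j x_{ij}` of event `i`. -/
def degVec (X : Fin m → Fin n → Ω → ℝ) (ω : Ω) (i : Fin m) : ℝ := ∑ j, X i j ω

/-- The degree `b_j = Σ_i x_{ij}` of actor `j`. -/
def bVec (X : Fin m → Fin n → Ω → ℝ) (ω : Ω) (j : Fin n) : ℝ := ∑ i, X i j ω

/-- The vector `g = (d_1, …, d_m, b_1, …, b_{n-1})`. -/
def gvec (X : Fin m → Fin n → Ω → ℝ) (ω : Ω) : Idx m n → ℝ :=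
  Sum.elim (degVec X ω) (fun j => bVec X ω (Fin.castLE (Nat.sub_le n 1) j))

/-- The affiliation network model: the `x_{ij}` are mutually independent `{0,1}`-valued
random variables with `P(x_{ij} = 1) = e^{α_i+β_j}/(1+e^{α_i+β_j})` (convention `β_n = 0`). -/
structure IsAffilModel [MeasurableSpace Ω] (P : Measure Ω)
    (θ : Idx m n → ℝ) (X : Fin m → Fin n → Ω → ℝ) : Prop where
  isProb : IsProbabilityMeasure P
  meas : ∀ i j, Measurable (X i j)
  binary : ∀ i j ω, X i j ω = 0 ∨ X i j ω = 1
  indep : iIndepFun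
    (fun p : Fin m × Fin n => X p.1 p.2) P
  prob_one : ∀ i j, P {ω | X i j ω = 1} = ENNReal.ofReal (pf (alphaF θ i + betaF θ j))

/-- The expectation `E g`. -/
def Eg [MeasurableSpace Ω] (P : Measure Ω) (X : Fin m → Fin n → Ω → ℝ) (k : Idx m n) : ℝ :=
  ∫ ω, gvec X ω k ∂P

/-- The likelihood equations: `θ` is an MLE for the observed degrees `(d, b)`. -/
def IsMLE (d : Fin m → ℝ) (b : Fin (n - 1) → ℝ) (θ : Idx m n → ℝ) : Prop :=
  (∀ i, d i = ∑ j : Fin n, pf (alphaF θ i + betaF θ j)) ∧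
  (∀ j : Fin (n - 1), b j = ∑ i : Fin m, pf (alphaF θ i + θ (Sum.inr j)))

/-- `θ` is an MLE for the degrees observed at the sample point `ω`. -/
def IsMLEat (X : Fin m → Fin n → Ω → ℝ) (ω : Ω) (θ : Idx m n → ℝ) : Prop :=
  IsMLE (degVec X ω) (fun j => bVec X ω (Fin.castLE (Nat.sub_le n 1) j)) θ

/-- The Fisher information matrix `V(θ)`. -/
def fisher (θ : Idx m n → ℝ) : Matrix (Idx m n) (Idx m n) ℝ :=
  fun k l => match k, l with
  | Sum.inl i, Sum.inl i' => if i = i' then ∑ j : Fin n, pf' (alphaF θ i + betaF θ j) else 0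
  | Sum.inl i, Sum.inr j => pf' (alphaF θ i + θ (Sum.inr j))
  | Sum.inr j, Sum.inl i => pf' (alphaF θ i + θ (Sum.inr j))
  | Sum.inr j, Sum.inr j' => if j = j' then ∑ i : Fin m, pf' (alphaF θ i + θ (Sum.inr j)) else 0

/-- `v_{i,m+n} := v_{ii} - Σ_{j ≠ i} v_{ij}`. -/
def vRem (V : Matrix (Idx m n) (Idx m n) ℝ) (i : Idx m n) : ℝ :=
  V i i - ∑ j ∈ Finset.univ.erase i, V i j

/-- `v_{m+n,m+n} := Σ_{i=1}^{m+n-1} v_{i,m+n}`. -/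
def vnnOf (V : Matrix (Idx m n) (Idx m n) ℝ) : ℝ := ∑ i, vRem V i

/-- `v_{m+n,m+n}` for the Fisher information matrix,
`Σ_{i=1}^m (v_{ii} - Σ_{j=m+1}^{m+n-1} v_{ij})`. -/
def vnnFisher (θ : Idx m n → ℝ) : ℝ :=
  ∑ i : Fin m,
    (fisher θ (Sum.inl i) (Sum.inl i) - ∑ j : Fin (n - 1), fisher θ (Sum.inl i) (Sum.inr j))

/-- The approximating matrix `S` built from `V`, with `1/v_{m+n,m+n}` replaced by `1/c`. -/
def approxSWith (V : Matrix (Idx m n) (Idx m n) ℝ) (c : ℝ) : Matrix (Idx m n) (Idx m n) ℝ :=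
  fun k l => match k, l with
  | Sum.inl i, Sum.inl i' => (if i = i' then (V (Sum.inl i) (Sum.inl i))⁻¹ else 0) + c⁻¹
  | Sum.inr j, Sum.inr j' => (if j = j' then (V (Sum.inr j) (Sum.inr j))⁻¹ else 0) + c⁻¹
  | _, _ => -c⁻¹

/-- The approximating matrix `S` built from a matrix `V` in the class `L_{m,n}(q,Q)`. -/
def approxS (V : Matrix (Idx m n) (Idx m n) ℝ) : Matrix (Idx m n) (Idx m n) ℝ :=
  approxSWith V (vnnOf V)

/-- The approximating matrix `S` built from the Fisher information matrix `V(θ)`. -/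
def fisherS (θ : Idx m n → ℝ) : Matrix (Idx m n) (Idx m n) ℝ :=
  approxSWith (fisher θ) (vnnFisher θ)

/-- Membership in the matrix class `L_{m,n}(q,Q)`. -/
structure MemL (m n : ℕ) (q Q : ℝ) (V : Matrix (Idx m n) (Idx m n) ℝ) : Prop where
  symm : V.IsSymm
  nonneg : ∀ i j, 0 ≤ V i j
  zero_ll : ∀ a b : Fin m, a ≠ b → V (Sum.inl a) (Sum.inl b) = 0
  zero_rr : ∀ a b : Fin (n - 1), a ≠ b → V (Sum.inr a) (Sum.inr b) = 0
  cross_lb : ∀ (a : Fin m) (b : Fin (n - 1)), q ≤ V (Sum.inl a) (Sum.inr b)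
  cross_ub : ∀ (a : Fin m) (b : Fin (n - 1)), V (Sum.inl a) (Sum.inr b) ≤ Q
  diag_l_lb : ∀ a : Fin m,
    q ≤ V (Sum.inl a) (Sum.inl a) - ∑ b : Fin (n - 1), V (Sum.inl a) (Sum.inr b)
  diag_l_ub : ∀ a : Fin m,
    V (Sum.inl a) (Sum.inl a) - ∑ b : Fin (n - 1), V (Sum.inl a) (Sum.inr b) ≤ Q
  diag_r : ∀ b : Fin (n - 1), V (Sum.inr b) (Sum.inr b) = ∑ a : Fin m, V (Sum.inl a) (Sum.inr b)

/-- `‖A‖ := max_{i,j} |a_{ij}|`. -/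
def matNorm (A : Matrix (Idx m n) (Idx m n) ℝ) : ℝ :=
  ‖fun p : Idx m n × Idx m n => A p.1 p.2‖

/-- The index (0-based) `i` of `θ ∈ ℝ^{m+n-1}` as an element of `Idx m n`, if it exists. -/
def coordIdx (m n i : ℕ) : Option (Idx m n) :=
  if h : i < m then some (Sum.inl ⟨i, h⟩)
  else if h' : i - m < n - 1 then some (Sum.inr ⟨i - m, h'⟩)
  else none

/-- The `i`-th coordinate (0-based) of a vector `x ∈ ℝ^{m+n-1}` (junk value `0` out of range). -/
def coordVal (x : Idx m n → ℝ) (i : ℕ) : ℝ := ((coordIdx m n i).map x).getD 0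

/-- The upper-left `k × k` block of a matrix indexed by `Idx m n`. -/
def blockK (A : Matrix (Idx m n) (Idx m n) ℝ) (k : ℕ) : Matrix (Fin k) (Fin k) ℝ :=
  fun i j => match coordIdx m n (i : ℕ), coordIdx m n (j : ℕ) with
    | some a, some b => A a b
    | _, _ => 0

/-- The inverse square root `A^{-1/2}` of a positive semidefinite matrix
(junk value `0` if `A` is not positive semidefinite). -/
def invSqrt {k : ℕ} (A : Matrix (Fin k) (Fin k) ℝ) : Matrix (Fin k) (Fin k) ℝ :=
  letI := Classical.propDecidable A.PosSemidef
  if h : A.PosSemidef then (h.1.eigenvectorUnitary.1 * diagonal (Real.sqrt ∘ h.1.eigenvalues) *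
    (star h.1.eigenvectorUnitary : Matrix (Fin k) (Fin k) ℝ))⁻¹ else 0

/-- The standard Gaussian distribution `N(0, I_k)` on `ℝ^k`. -/
def stdGaussian (k : ℕ) : Measure (Fin k → ℝ) :=
  Measure.pi fun _ => gaussianReal 0 1

/-- The function `F(θ)` whose components are
`F_i(θ) = d_i - Σ_k f(α_i + β_k)` and `F_{m+j}(θ) = b_j - Σ_k f(α_k + β_j)`. -/
def Fvec (f : ℝ → ℝ) (d : Fin m → ℝ) (b : Fin (n - 1) → ℝ) (θ : Idx m n → ℝ) : Idx m n → ℝ :=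
  fun k => match k with
  | Sum.inl i => d i - ∑ j : Fin n, f (alphaF θ i + betaF θ j)
  | Sum.inr j => b j - ∑ i : Fin m, f (alphaF θ i + θ (Sum.inr j))

/-- The Jacobian matrix `F'(θ)` of `Fvec f d b`. -/
def jacF (f : ℝ → ℝ) (θ : Idx m n → ℝ) : Matrix (Idx m n) (Idx m n) ℝ :=
  fun k l => match k, l with
  | Sum.inl i, Sum.inl i' =>
      if i = i' then -∑ j : Fin n, deriv f (alphaF θ i + betaF θ j) else 0
  | Sum.inl i, Sum.inr j => -deriv f (alphaF θ i + θ (Sum.inr j))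
  | Sum.inr j, Sum.inl i => -deriv f (alphaF θ i + θ (Sum.inr j))
  | Sum.inr j, Sum.inr j' =>
      if j = j' then -∑ i : Fin m, deriv f (alphaF θ i + θ (Sum.inr j)) else 0

/-- The Newton iterates `θ^{(k+1)} = θ^{(k)} - [F'(θ^{(k)})]⁻¹ F(θ^{(k)})`. -/
def newton (f : ℝ → ℝ) (d : Fin m → ℝ) (b : Fin (n - 1) → ℝ) (θ0 : Idx m n → ℝ) :
    ℕ → Idx m n → ℝ
  | 0 => θ0
  | k + 1 =>
    newton f d b θ0 k - (jacF f (newton f d b θ0 k))⁻¹.mulVec (Fvec f d b (newton f d b θ0 k))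

/-!
Write `w = (1, …, 1, -1, …, -1)` and `c = v_{m+n,m+n}`. Then `S = diag(v_kk)⁻¹ + c⁻¹ w wᵀ`, and
the conditions defining `L_{m,n}(q,Q)` give `V w = (v_{k,m+n})_k`, whence
`wᵀ V w = c`. For such a rank-one perturbation of a diagonal matrix, `S (I - V S)` has the closed
form `W_kl = δ_kl / v_kk - v_kl / (v_kk v_ll) - (x_k w_l + w_k x_l)` with
`x_k = v_{k,m+n} / (v_kk c)`; it vanishes on the lower-right block. Since `v_kk ≥ n q` for `k ≤ m`,
`v_ll ≥ m q` for `l > m` and `c ≥ m q`, both `x_k` and the cross ratios `v_kl / (v_kk v_ll)` lie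
in `[0, Q / (q² m n)]`. So each row of `W` lies in an interval of length at most
`3 Q / (q² m n)` containing `0`, which gives both bounds.
-/

theorem _root_.Matrix.add_smul_vecMulVec_mul_one_sub_mul {ι K : Type*} [Fintype ι]
    [DecidableEq ι] [Field K] {V D : Matrix ι ι K} {w ρ : ι → K} {c : K} (hV : Vᵀ = V)
    (hD : Dᵀ = D) (hρ : V *ᵥ w = ρ) (hc : w ⬝ᵥ ρ = c) (hc0 : c ≠ 0) :
    (D + c⁻¹ • vecMulVec w w) * (1 - V * (D + c⁻¹ • vecMulVec w w)) =
      D - D * V * D - c⁻¹ • (vecMulVec (D *ᵥ ρ) w + vecMulVec w (D *ᵥ ρ)) := by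
  have hVK : V * vecMulVec w w = vecMulVec ρ w := by rw [mul_vecMulVec, hρ]
  have hKV : vecMulVec w w * V = vecMulVec w ρ := by
    rw [vecMulVec_mul, ← mulVec_transpose, hV, hρ]
  have hρD : ρ ᵥ* D = D *ᵥ ρ := by rw [← mulVec_transpose, hD]
  have hKρ : vecMulVec w w *ᵥ ρ = c • w := by rw [vecMulVec_mulVec, hc, op_smul_eq_smul]
  have hinv : c⁻¹ * (c⁻¹ * c) = c⁻¹ := by rw [inv_mul_cancel₀ hc0, mul_one]
  simp only [mul_sub, mul_add, add_mul, mul_one, Matrix.mul_smul, Matrix.smul_mul, hVK,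
    ← Matrix.mul_assoc, hKV, mul_vecMulVec, vecMulVec_mul, hρD, smul_mulVec, hKρ,
    smul_vecMulVec, smul_smul, hinv]
  module

theorem div_mul_mem_Icc {q Q a x y d₁ d₂ : ℝ} (hq : 0 < q) (hx : 0 < x) (hy : 0 < y)
    (ha : a ∈ Set.Icc 0 Q) (h₁ : x * q ≤ d₁) (h₂ : y * q ≤ d₂) :
    a / (d₁ * d₂) ∈ Set.Icc 0 (Q / (q ^ 2 * y * x)) := by
  have hd₁ : 0 < d₁ := lt_of_lt_of_le (by positivity) h₁
  have hd₂ : 0 < d₂ := lt_of_lt_of_le (by positivity) h₂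
  refine ⟨div_nonneg ha.1 (by positivity), ?_⟩
  calc a / (d₁ * d₂)
      ≤ Q / (x * q * (y * q)) := div_le_div₀ (ha.1.trans ha.2) ha.2 (by positivity)
        (mul_le_mul h₁ h₂ (by positivity) hd₁.le)
    _ = Q / (q ^ 2 * y * x) := by ring

theorem abs_le_and_abs_sub_le_of_mem_Icc {a b C x y : ℝ} (ha : a ≤ 0) (hb : 0 ≤ b)
    (hC : b - a ≤ C) (hx : x ∈ Set.Icc a b) (hy : y ∈ Set.Icc a b) :
    |x| ≤ C ∧ |x - y| ≤ C :=
  ⟨abs_le.2 ⟨by linarith [hx.1], by linarith [hx.2]⟩,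
    abs_le.2 ⟨by linarith [hx.1, hy.2], by linarith [hx.2, hy.1]⟩⟩

def blockSign (m n : ℕ) : Idx m n → ℝ := Sum.elim 1 (-1)

def approxW (V : Matrix (Idx m n) (Idx m n) ℝ) : Matrix (Idx m n) (Idx m n) ℝ :=
  approxS V * (1 - V * approxS V)

theorem approxS_eq (V : Matrix (Idx m n) (Idx m n) ℝ) :
    approxS V = diagonal (fun k => (V k k)⁻¹) +
      (vnnOf V)⁻¹ • vecMulVec (blockSign m n) (blockSign m n) := by
  ext (i | i) (j | j) <;>
    simp [approxS, approxSWith, blockSign, diagonal_apply, vecMulVec_apply, eq_comm]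

section MemL

variable {q Q : ℝ} {V : Matrix (Idx m n) (Idx m n) ℝ}

theorem MemL.sum_inl_inl (hV : MemL m n q Q V) (i : Fin m) :
    ∑ a, V (Sum.inl i) (Sum.inl a) = V (Sum.inl i) (Sum.inl i) :=
  Finset.sum_eq_single i (fun a _ ha => hV.zero_ll i a (Ne.symm ha)) (by simp)

theorem MemL.sum_inr_inr (hV : MemL m n q Q V) (j : Fin (n - 1)) :
    ∑ s, V (Sum.inr j) (Sum.inr s) = V (Sum.inr j) (Sum.inr j) :=
  Finset.sum_eq_single j (fun s _ hs => hV.zero_rr j s (Ne.symm hs)) (by simp)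

theorem MemL.sum_inr_inl (hV : MemL m n q Q V) (j : Fin (n - 1)) :
    ∑ a, V (Sum.inr j) (Sum.inl a) = V (Sum.inr j) (Sum.inr j) := by
  simp only [hV.symm.apply (Sum.inl _), hV.diag_r]

theorem MemL.vRem_inl (hV : MemL m n q Q V) (i : Fin m) :
    vRem V (Sum.inl i) = V (Sum.inl i) (Sum.inl i) - ∑ s, V (Sum.inl i) (Sum.inr s) := by
  rw [vRem, Finset.sum_erase_eq_sub (Finset.mem_univ _), Fintype.sum_sum_type, hV.sum_inl_inl]
  ring

theorem MemL.vRem_inr (hV : MemL m n q Q V) (j : Fin (n - 1)) : vRem V (Sum.inr j) = 0 := by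
  rw [vRem, Finset.sum_erase_eq_sub (Finset.mem_univ _), Fintype.sum_sum_type, hV.sum_inr_inl,
    hV.sum_inr_inr]
  ring

theorem MemL.mulVec_blockSign (hV : MemL m n q Q V) : V *ᵥ blockSign m n = vRem V := by
  ext (i | j) <;>
    simp [mulVec, dotProduct, Fintype.sum_sum_type, blockSign, hV.vRem_inl, hV.vRem_inr,
      hV.sum_inl_inl, hV.sum_inr_inl, hV.sum_inr_inr, sub_eq_add_neg]

theorem MemL.blockSign_dotProduct_vRem (hV : MemL m n q Q V) :
    blockSign m n ⬝ᵥ vRem V = vnnOf V := by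
  simp [dotProduct, vnnOf, Fintype.sum_sum_type, blockSign, hV.vRem_inr]

theorem MemL.approxW_apply (hV : MemL m n q Q V) (hc : vnnOf V ≠ 0) (k l : Idx m n) :
    approxW V k l =
      (if k = l then (V k k)⁻¹ else 0) - V k l / (V k k * V l l) -
        (vRem V k / (V k k * vnnOf V) * blockSign m n l +
          blockSign m n k * (vRem V l / (V l l * vnnOf V))) := by
  rw [approxW, approxS_eq, Matrix.add_smul_vecMulVec_mul_one_sub_mul hV.symm
    (diagonal_transpose _) hV.mulVec_blockSign hV.blockSign_dotProduct_vRem hc]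
  simp only [Matrix.sub_apply, Matrix.add_apply, Matrix.smul_apply, smul_add, smul_eq_mul,
    diagonal_apply, diagonal_mul, mul_diagonal, mulVec_diagonal, vecMulVec_apply]
  ring

theorem MemL.approxW_inl_inl (hV : MemL m n q Q V) (hc : vnnOf V ≠ 0) (i l : Fin m) :
    approxW V (Sum.inl i) (Sum.inl l) =
      -(vRem V (Sum.inl i) / (V (Sum.inl i) (Sum.inl i) * vnnOf V)) -
        vRem V (Sum.inl l) / (V (Sum.inl l) (Sum.inl l) * vnnOf V) := by
  rw [hV.approxW_apply hc]
  obtain rfl | hil := eq_or_ne i l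
  · simp only [if_true, div_self_mul_self', sub_self, blockSign, Sum.elim_inl, Pi.one_apply]
    ring
  · simp only [Sum.inl.injEq, hil, if_false, hV.zero_ll i l hil, zero_div, sub_self, blockSign,
      Sum.elim_inl, Pi.one_apply]
    ring

theorem MemL.approxW_inl_inr (hV : MemL m n q Q V) (hc : vnnOf V ≠ 0) (i : Fin m)
    (s : Fin (n - 1)) :
    approxW V (Sum.inl i) (Sum.inr s) =
      vRem V (Sum.inl i) / (V (Sum.inl i) (Sum.inl i) * vnnOf V) -
        V (Sum.inl i) (Sum.inr s) / (V (Sum.inl i) (Sum.inl i) * V (Sum.inr s) (Sum.inr s)) := by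
  rw [hV.approxW_apply hc]
  simp only [reduceCtorEq, if_false, blockSign, Sum.elim_inl, Sum.elim_inr, Pi.one_apply,
    Pi.neg_apply, hV.vRem_inr, zero_div]
  ring

theorem MemL.approxW_inr_inl (hV : MemL m n q Q V) (hc : vnnOf V ≠ 0) (s : Fin (n - 1))
    (l : Fin m) :
    approxW V (Sum.inr s) (Sum.inl l) =
      vRem V (Sum.inl l) / (V (Sum.inl l) (Sum.inl l) * vnnOf V) -
        V (Sum.inl l) (Sum.inr s) / (V (Sum.inl l) (Sum.inl l) * V (Sum.inr s) (Sum.inr s)) := by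
  rw [hV.approxW_apply hc, hV.symm.apply (Sum.inl l)]
  simp only [reduceCtorEq, if_false, blockSign, Sum.elim_inl, Sum.elim_inr, Pi.one_apply,
    Pi.neg_apply, hV.vRem_inr, zero_div]
  ring

theorem MemL.approxW_inr_inr (hV : MemL m n q Q V) (hc : vnnOf V ≠ 0) (s t : Fin (n - 1)) :
    approxW V (Sum.inr s) (Sum.inr t) = 0 := by
  rw [hV.approxW_apply hc]
  obtain rfl | hst := eq_or_ne s t
  · simp [hV.vRem_inr]
  · simp [hst, hV.zero_rr s t hst, hV.vRem_inr]

theorem MemL.mul_le_diag_inl (hV : MemL m n q Q V) (hn : 1 ≤ n) (i : Fin m) :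
    n * q ≤ V (Sum.inl i) (Sum.inl i) := by
  have hcross : ((n - 1 : ℕ) : ℝ) * q ≤ ∑ s, V (Sum.inl i) (Sum.inr s) := by
    simpa using Finset.card_nsmul_le_sum Finset.univ _ q fun s _ => hV.cross_lb i s
  rw [Nat.cast_sub hn, Nat.cast_one] at hcross
  linarith [hV.diag_l_lb i]

theorem MemL.mul_le_diag_inr (hV : MemL m n q Q V) (s : Fin (n - 1)) :
    m * q ≤ V (Sum.inr s) (Sum.inr s) := by
  rw [hV.diag_r s]
  simpa using Finset.card_nsmul_le_sum Finset.univ _ q fun a _ => hV.cross_lb a s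

theorem MemL.mul_le_vnnOf (hV : MemL m n q Q V) : m * q ≤ vnnOf V := by
  rw [vnnOf, Fintype.sum_sum_type]
  simp only [hV.vRem_inr, Finset.sum_const_zero, add_zero]
  simpa using Finset.card_nsmul_le_sum Finset.univ (fun a => vRem V (Sum.inl a)) q
    fun a _ => hV.vRem_inl a ▸ hV.diag_l_lb a

theorem MemL.vRem_div_mem_Icc (hV : MemL m n q Q V) (hm : 1 ≤ m) (hn : 1 ≤ n) (hq : 0 < q)
    (i : Fin m) :
    vRem V (Sum.inl i) / (V (Sum.inl i) (Sum.inl i) * vnnOf V) ∈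
      Set.Icc 0 (Q / (q ^ 2 * m * n)) := by
  refine div_mul_mem_Icc hq (by exact_mod_cast hn) (by exact_mod_cast hm) ?_
    (hV.mul_le_diag_inl hn i) hV.mul_le_vnnOf
  rw [hV.vRem_inl]
  exact ⟨hq.le.trans (hV.diag_l_lb i), hV.diag_l_ub i⟩

theorem MemL.cross_div_mem_Icc (hV : MemL m n q Q V) (hm : 1 ≤ m) (hn : 1 ≤ n) (hq : 0 < q)
    (i : Fin m) (s : Fin (n - 1)) :
    V (Sum.inl i) (Sum.inr s) / (V (Sum.inl i) (Sum.inl i) * V (Sum.inr s) (Sum.inr s)) ∈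
      Set.Icc 0 (Q / (q ^ 2 * m * n)) :=
  div_mul_mem_Icc hq (by exact_mod_cast hn) (by exact_mod_cast hm)
    ⟨hV.nonneg _ _, hV.cross_ub i s⟩ (hV.mul_le_diag_inl hn i) (hV.mul_le_diag_inr s)

theorem MemL.approxW_row_mem_Icc (hV : MemL m n q Q V) (hm : 1 ≤ m) (hn : 1 ≤ n) (hq : 0 < q)
    (k : Idx m n) :
    ∃ a b, a ≤ 0 ∧ 0 ≤ b ∧ b - a ≤ 3 * (Q / (q ^ 2 * m * n)) ∧
      ∀ l, approxW V k l ∈ Set.Icc a b := by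
  have hm' : (0 : ℝ) < m := by exact_mod_cast hm
  have hc : vnnOf V ≠ 0 := (lt_of_lt_of_le (by positivity) hV.mul_le_vnnOf).ne'
  have hx := hV.vRem_div_mem_Icc hm hn hq
  have hy := hV.cross_div_mem_Icc hm hn hq
  set B := Q / (q ^ 2 * m * n)
  have hB : 0 ≤ B := (hx ⟨0, hm⟩).1.trans (hx ⟨0, hm⟩).2
  rcases k with i | s
  · obtain ⟨hxi₀, hxiB⟩ := hx i
    refine ⟨-(vRem V (Sum.inl i) / (V (Sum.inl i) (Sum.inl i) * vnnOf V)) - B, _,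
      by linarith, hxi₀, by linarith, fun l => ?_⟩
    rcases l with l | t
    · rw [hV.approxW_inl_inl hc]
      exact ⟨by linarith [(hx l).2], by linarith [(hx l).1]⟩
    · rw [hV.approxW_inl_inr hc]
      exact ⟨by linarith [(hy i t).2], by linarith [(hy i t).1]⟩
  · refine ⟨-B, B, by linarith, hB, by linarith, fun l => ?_⟩
    rcases l with l | t
    · rw [hV.approxW_inr_inl hc]
      exact ⟨by linarith [(hx l).1, (hy l s).2], by linarith [(hx l).2, (hy l s).1]⟩
    · rw [hV.approxW_inr_inr hc]
      exact ⟨by linarith, hB⟩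

end MemL

theorem W_entry_bounds_general (m n : ℕ) (hm : 1 ≤ m) (hmn : m ≤ n)
    (q Q : ℝ) (hq : 0 < q)
    (V : Matrix (Idx m n) (Idx m n) ℝ) (hV : MemL m n q Q V) :
    ∀ i j k : Idx m n,
      |(approxS V * (1 - V * approxS V)) i j| ≤ 3 * Q / (q ^ 2 * m * n) ∧
      |(approxS V * (1 - V * approxS V)) i j - (approxS V * (1 - V * approxS V)) i k| ≤
        3 * Q / (q ^ 2 * m * n) := by
  intro i j k
  obtain ⟨a, b, ha, hb, hab, hrow⟩ := hV.approxW_row_mem_Icc hm (hm.trans hmn) hq i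
  rw [mul_div_assoc]
  exact abs_le_and_abs_sub_le_of_mem_Icc ha hb hab (hrow j) (hrow k)

/-- entrywise bounds for `W = S (I - V S)`. -/
theorem W_entry_bounds (m n : ℕ) (hm : 1 ≤ m) (hmn : m ≤ n)
    (q Q : ℝ) (hq : 0 < q) (hqQ : q ≤ Q)
    (V : Matrix (Idx m n) (Idx m n) ℝ) (hV : MemL m n q Q V) :
    ∀ i j k : Idx m n,
      |(approxS V * (1 - V * approxS V)) i j| ≤ 3 * Q / (q ^ 2 * m * n) ∧
      |(approxS V * (1 - V * approxS V)) i j - (approxS V * (1 - V * approxS V)) i k| ≤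
        3 * Q / (q ^ 2 * m * n) :=
  W_entry_bounds_general m n hm hmn q Q hq V hV

end Affiliation
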